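/- arXiv:2503.18625 — 2 statements merged into one kernel-verified Lean document; each statement's English description precedes it below -/
import Mathlib

section
/- Let M be a positive integer and Γ₁, Γ₂, …, Γ_L pairwise coprime Gaussian integers with |Γ_i| ≥ √2 for each i, such that Γ = Γ₁Γ₂⋯Γ_L is a positive integer. Let γ_i = Γ/Γ_i and γ̄_i, Γ̄_i ∈ ℤ[i] with γ_i·γ̄_i + Γ_i·Γ̄_i = 1. Let N ∈ F_{MΓ} be a complex number with remainders r_i = ⟨N⟩_{MΓ_i}. Then: (a) ⟨r_i⟩_M = ⟨N⟩_M for every i, so all remainders share the common remainder r^c := ⟨N⟩_M; (b) q_i := (r_i − r^c)/M is a Gaussian integer for every i; and (c) N = M·⟨ Σ_{i=1}^{L} γ̄_i·γ_i·q_i ⟩_Γ + r^c. -/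
open Complex MeasureTheory

noncomputable section

/-- `z` is a Gaussian integer, i.e. an element of `ℤ[i] ⊆ ℂ`. -/
def IsGaussInt (z : ℂ) : Prop := ∃ a b : ℤ, z = (a : ℂ) + (b : ℂ) * Complex.I

/-- Divisibility within the Gaussian integers. -/
def GaussDvd (d z : ℂ) : Prop := ∃ q : ℂ, IsGaussInt q ∧ z = d * q

/-- Two Gaussian integers are coprime: every common Gaussian-integer divisor is a unit. -/
def GaussCoprime (x y : ℂ) : Prop :=
  ∀ d : ℂ, IsGaussInt d → GaussDvd d x → GaussDvd d y →
    d = 1 ∨ d = -1 ∨ d = Complex.I ∨ d = -Complex.I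

/-- Componentwise floor `⌊z⌋ = ⌊Re z⌋ + ⌊Im z⌋·i`. -/
def cfloor (z : ℂ) : ℂ := (⌊z.re⌋ : ℂ) + (⌊z.im⌋ : ℂ) * Complex.I

/-- Componentwise rounding `[z] = [Re z] + [Im z]·i`, where `[x]` is the unique
integer with `-1/2 ≤ x - [x] < 1/2`. -/
def cround (z : ℂ) : ℂ := (round z.re : ℂ) + (round z.im : ℂ) * Complex.I

/-- Remainder of `z` modulo `m`: `⟨z⟩_m = z - m·⌊z/m⌋`. -/
def cmod (z m : ℂ) : ℂ := z - m * cfloor (z / m)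

/-- Circular distance `d_m(x, y) = x - y - [(x-y)/m]·m`. -/
def cdist (m x y : ℂ) : ℂ := x - y - cround ((x - y) / m) * m

/-- The complex remainder set `F_m = {m(a+b·i) : 0 ≤ a, b < 1}`. -/
def FM (m : ℂ) : Set ℂ :=
  {z | ∃ a b : ℝ, 0 ≤ a ∧ a < 1 ∧ 0 ≤ b ∧ b < 1 ∧ z = m * ((a : ℂ) + (b : ℂ) * Complex.I)}

/-- The set `S_m = {m(c+d·i) : -1/2 ≤ c, d < 1/2}`. -/
def SM (m : ℂ) : Set ℂ :=
  {z | ∃ c d : ℝ, -(1/2) ≤ c ∧ c < 1/2 ∧ -(1/2) ≤ d ∧ d < 1/2 ∧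
    z = m * ((c : ℂ) + (d : ℂ) * Complex.I)}


open GaussianInt

lemma isGaussInt_iff {z : ℂ} : IsGaussInt z ↔ ∃ g : GaussianInt, (g : ℂ) = z := by
  constructor
  · rintro ⟨a, b, rfl⟩; exact ⟨⟨a, b⟩, by simp [toComplex_def']⟩
  · rintro ⟨g, rfl⟩; exact ⟨g.re, g.im, by simp [toComplex_def]⟩

lemma cfloor_add_gauss (w : ℂ) (g : GaussianInt) : cfloor (w + g) = cfloor w + g := by
  unfold cfloor
  rw [Complex.add_re, Complex.add_im, ← GaussianInt.intCast_re, ← GaussianInt.intCast_im, Int.floor_add_intCast,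
    Int.floor_add_intCast, toComplex_def]
  push_cast
  ring

lemma cmod_add_mul {m : ℂ} (hm : m ≠ 0) (z : ℂ) (g : GaussianInt) :
    cmod (z + m * g) m = cmod z m := by
  have h : (z + m * g) / m = z / m + g := by field_simp
  unfold cmod
  rw [h, cfloor_add_gauss]
  ring

lemma cmod_gauss_eq {G : ℤ} (hG : 0 < G) (Q : GaussianInt) (h1 : 0 ≤ Q.re) (h2 : Q.re < G)
    (h3 : 0 ≤ Q.im) (h4 : Q.im < G) : cmod (Q : ℂ) (G : ℂ) = Q := by
  have hGR : (0:ℝ) < (G:ℝ) := by exact_mod_cast hG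
  have hre : ((Q:ℂ) / (G:ℂ)).re = (Q.re : ℝ) / G := by
    rw [show ((G:ℤ):ℂ) = ((G:ℝ):ℂ) by push_cast; ring, div_ofReal_re, ← GaussianInt.intCast_re]
  have him : ((Q:ℂ) / (G:ℂ)).im = (Q.im : ℝ) / G := by
    rw [show ((G:ℤ):ℂ) = ((G:ℝ):ℂ) by push_cast; ring, div_ofReal_im, ← GaussianInt.intCast_im]
  have f1 : ⌊((Q:ℂ) / (G:ℂ)).re⌋ = 0 := by
    rw [hre, Int.floor_eq_zero_iff]
    constructor
    · positivity
    · rw [div_lt_one hGR]; exact_mod_cast h2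
  have f2 : ⌊((Q:ℂ) / (G:ℂ)).im⌋ = 0 := by
    rw [him, Int.floor_eq_zero_iff]
    constructor
    · positivity
    · rw [div_lt_one hGR]; exact_mod_cast h4
  rw [cmod, cfloor, f1, f2]
  simp

lemma isCoprime_of_gaussCoprime {x y : GaussianInt} (h : GaussCoprime (x:ℂ) (y:ℂ)) : IsCoprime x y := by
  set d := EuclideanDomain.gcd x y with hd
  have hdvd : ∀ {a : GaussianInt}, d ∣ a → GaussDvd (d:ℂ) (a:ℂ) := by
    rintro a ⟨c, rfl⟩
    exact ⟨(c:ℂ), isGaussInt_iff.mpr ⟨c, rfl⟩, by rw [toComplex_mul]⟩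
  have hu := h (d:ℂ) (isGaussInt_iff.mpr ⟨d, rfl⟩)
    (hdvd (EuclideanDomain.gcd_dvd_left x y)) (hdvd (EuclideanDomain.gcd_dvd_right x y))
  have hunit : IsUnit d := by
    rcases hu with h1 | h1 | h1 | h1
    · have : d = 1 := toComplex_inj.mp (by rw [h1, toComplex_one])
      exact this ▸ isUnit_one
    · have : d = -1 := toComplex_inj.mp (by rw [h1]; simp)
      exact this ▸ (isUnit_one).neg
    · have : d = ⟨0, 1⟩ := toComplex_inj.mp (by rw [h1, toComplex_def']; simp)
      exact this ▸ IsUnit.of_mul_eq_one ⟨0, -1⟩ (by decide)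
    · have : d = ⟨0, -1⟩ := toComplex_inj.mp (by rw [h1, toComplex_def']; simp)
      exact this ▸ IsUnit.of_mul_eq_one ⟨0, 1⟩ (by decide)
  obtain ⟨u, hu'⟩ := hunit
  refine ⟨↑u⁻¹ * EuclideanDomain.gcdA x y, ↑u⁻¹ * EuclideanDomain.gcdB x y, ?_⟩
  have hb := EuclideanDomain.gcd_eq_gcd_ab x y
  calc ↑u⁻¹ * EuclideanDomain.gcdA x y * x + ↑u⁻¹ * EuclideanDomain.gcdB x y * y
      = ↑u⁻¹ * (x * EuclideanDomain.gcdA x y + y * EuclideanDomain.gcdB x y) := by ring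
    _ = ↑u⁻¹ * ↑u := by rw [← hb, ← hd, hu']
    _ = 1 := Units.inv_mul u


/-- With moduli `M·Γᵢ` sharing the common factor `M`: (a) all remainders agree
modulo `M` (common remainder `r^c = ⟨N⟩_M`); (b) `qᵢ = (rᵢ - r^c)/M` is a
Gaussian integer; (c) the reconstruction formula `N = M·⟨Σ γ̄ᵢγᵢqᵢ⟩_Γ + r^c`. -/
theorem stmt8 (L : ℕ) (M : ℤ) (hM : 0 < M) (Γ : Fin L → ℂ)
    (hGauss : ∀ i, IsGaussInt (Γ i))
    (habs : ∀ i, Real.sqrt 2 ≤ ‖Γ i‖)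
    (hcop : ∀ i j, i ≠ j → GaussCoprime (Γ i) (Γ j))
    (G : ℤ) (hGpos : 0 < G) (hGprod : (∏ i, Γ i) = (G : ℂ))
    (γ γbar Γbar : Fin L → ℂ)
    (hγ : ∀ i, γ i = (∏ j, Γ j) / Γ i)
    (hγbar : ∀ i, IsGaussInt (γbar i)) (hΓbar : ∀ i, IsGaussInt (Γbar i))
    (hBezout : ∀ i, γ i * γbar i + Γ i * Γbar i = 1)
    (N : ℂ) (hN : N ∈ FM ((M : ℂ) * ∏ i, Γ i))
    (r : Fin L → ℂ) (hr : ∀ i, r i = cmod N ((M : ℂ) * Γ i))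
    (rc : ℂ) (hrc : rc = cmod N (M : ℂ))
    (q : Fin L → ℂ) (hq : ∀ i, q i = (r i - rc) / (M : ℂ)) :
    (∀ i, cmod (r i) (M : ℂ) = rc) ∧
    (∀ i, IsGaussInt (q i)) ∧
    N = (M : ℂ) * cmod (∑ i, γbar i * γ i * q i) (∏ i, Γ i) + rc := by
  have hM0 : ((M : ℤ) : ℂ) ≠ 0 := by
    exact_mod_cast hM.ne'
  have hGc0 : ((G : ℤ) : ℂ) ≠ 0 := by
    exact_mod_cast hGpos.ne'
  have hΓ0 : ∀ i, Γ i ≠ 0 := by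
    intro i h
    have h2 : (0:ℝ) < Real.sqrt 2 := Real.sqrt_pos.mpr two_pos
    have := habs i
    rw [h, norm_zero] at this
    linarith
  choose g hg using fun i => isGaussInt_iff.mp (hGauss i)
  choose gb hgb using fun i => isGaussInt_iff.mp (hγbar i)
  choose gB hgB using fun i => isGaussInt_iff.mp (hΓbar i)
  set Q : GaussianInt := ⟨⌊(N / (M:ℂ)).re⌋, ⌊(N / (M:ℂ)).im⌋⟩ with hQdef
  have hQ : (Q : ℂ) = cfloor (N / (M:ℂ)) := by rw [toComplex_def']; rfl
  set f : Fin L → GaussianInt :=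
      fun i => ⟨⌊(N / ((M:ℂ) * Γ i)).re⌋, ⌊(N / ((M:ℂ) * Γ i)).im⌋⟩ with hfdef
  have hf : ∀ i, (f i : ℂ) = cfloor (N / ((M:ℂ) * Γ i)) := fun i => by
    rw [toComplex_def']; rfl
  have hrc' : rc = N - (M:ℂ) * (Q : ℂ) := by
    rw [hrc]; unfold cmod; rw [hQ]
  have hri : ∀ i, r i = N - (M:ℂ) * ((g i * f i : GaussianInt) : ℂ) := by
    intro i
    rw [hr i]; unfold cmod
    rw [toComplex_mul, hg i, hf i]
    ring
  -- part (a)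
  have parta : ∀ i, cmod (r i) (M:ℂ) = rc := by
    intro i
    have h1 : r i = N + (M:ℂ) * ((-(g i * f i) : GaussianInt) : ℂ) := by
      rw [hri i, toComplex_neg]; ring
    rw [h1, cmod_add_mul hM0, ← hrc]
  -- part (b)
  have hq' : ∀ i, q i = ((Q - g i * f i : GaussianInt) : ℂ) := by
    intro i
    rw [hq i, hri i, hrc', toComplex_sub]
    field_simp
    ring
  have partb : ∀ i, IsGaussInt (q i) := fun i => isGaussInt_iff.mpr ⟨_, (hq' i).symm⟩
  -- part (c)
  have hprodg : ((∏ j, g j : GaussianInt) : ℂ) = (G : ℂ) := by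
    rw [map_prod toComplex g Finset.univ, ← hGprod]
    exact Finset.prod_congr rfl fun j _ => hg j
  have hγ' : ∀ i, γ i = ((∏ j ∈ Finset.univ.erase i, g j : GaussianInt) : ℂ) := by
    intro i
    have h1 : (∏ j, Γ j) = Γ i * ∏ j ∈ Finset.univ.erase i, Γ j :=
      (Finset.mul_prod_erase Finset.univ Γ (Finset.mem_univ i)).symm
    rw [hγ i, h1, mul_div_cancel_left₀ _ (hΓ0 i), map_prod toComplex g]
    exact Finset.prod_congr rfl fun j _ => (hg j).symm
  have hbez : ∀ i, (∏ j ∈ Finset.univ.erase i, g j) * gb i + g i * gB i = 1 := by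
    intro i
    apply toComplex_inj.mp
    rw [map_add, map_mul, map_mul, map_one, ← hγ' i, hgb, hgB, hg]
    exact hBezout i
  have hcop' : Pairwise (Function.onFun IsCoprime g) := by
    intro i j hij
    apply isCoprime_of_gaussCoprime
    rw [hg, hg]
    exact hcop i j hij
  have hkey : ∀ i, g i ∣ (∑ j, gb j * ∏ k ∈ Finset.univ.erase j, g k) - 1 := by
    intro i
    have hsplit : (∑ j, gb j * ∏ k ∈ Finset.univ.erase j, g k)
        = gb i * ∏ k ∈ Finset.univ.erase i, g k
          + ∑ j ∈ Finset.univ.erase i, gb j * ∏ k ∈ Finset.univ.erase j, g k :=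
      (Finset.add_sum_erase _ _ (Finset.mem_univ i)).symm
    have h1 : gb i * ∏ k ∈ Finset.univ.erase i, g k = 1 - g i * gB i := by
      have := hbez i; linear_combination this
    have h2 : g i ∣ ∑ j ∈ Finset.univ.erase i, gb j * ∏ k ∈ Finset.univ.erase j, g k := by
      apply Finset.dvd_sum
      intro j hj
      have hji : i ∈ Finset.univ.erase j := by
        rw [Finset.mem_erase] at hj ⊢
        exact ⟨fun h => hj.1 h.symm, Finset.mem_univ i⟩
      exact Dvd.dvd.mul_left (Finset.dvd_prod_of_mem g hji) _
    rw [hsplit, h1]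
    have h3 : (1 - g i * gB i
          + ∑ j ∈ Finset.univ.erase i, gb j * ∏ k ∈ Finset.univ.erase j, g k) - 1
        = -(g i * gB i) + ∑ j ∈ Finset.univ.erase i, gb j * ∏ k ∈ Finset.univ.erase j, g k := by
      ring
    rw [h3]
    exact dvd_add ((dvd_mul_right (g i) (gB i)).neg_right) h2
  have hProdDvd : (∏ j, g j) ∣ (∑ j, gb j * ∏ k ∈ Finset.univ.erase j, g k) - 1 :=
    Fintype.prod_dvd_of_coprime hcop' hkey
  have hPe : ∀ j, g j * ∏ k ∈ Finset.univ.erase j, g k = ∏ k, g k :=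
    fun j => Finset.mul_prod_erase Finset.univ g (Finset.mem_univ j)
  set P := ∏ j, g j with hPdef
  set S := ∑ j, gb j * (∏ k ∈ Finset.univ.erase j, g k) * (Q - g j * f j) with hSdef
  have hSQ : P ∣ S - Q := by
    have hterm : ∀ j, gb j * (∏ k ∈ Finset.univ.erase j, g k) * (Q - g j * f j)
        = gb j * (∏ k ∈ Finset.univ.erase j, g k) * Q - P * (gb j * f j) := by
      intro j
      rw [← hPe j]; ring
    have hexp : S - Q = ((∑ j, gb j * ∏ k ∈ Finset.univ.erase j, g k) - 1) * Q
        - P * (∑ j, gb j * f j) := by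
      rw [hSdef, Finset.sum_congr rfl (fun j _ => hterm j), Finset.sum_sub_distrib,
        sub_mul, Finset.sum_mul, Finset.mul_sum, one_mul]
      ring
    rw [hexp]
    exact dvd_sub (hProdDvd.mul_right Q) (dvd_mul_right P _)
  obtain ⟨w, hw⟩ := hSQ
  have hw' : S = Q + P * w := by linear_combination hw
  have hsum : (∑ i, γbar i * γ i * q i) = (S : ℂ) := by
    rw [hSdef, map_sum]
    apply Finset.sum_congr rfl
    intro j _
    rw [hq' j, hγ' j, ← hgb j, map_mul, map_mul]
  have hSc : (S : ℂ) = (Q : ℂ) + (G : ℂ) * (w : ℂ) := by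
    rw [hw', map_add, map_mul, hprodg]
  -- bounds on Q
  obtain ⟨a, b, ha0, ha1, hb0, hb1, hNe⟩ := hN
  have hNM : N / (M:ℂ) = ((G:ℝ):ℂ) * ((a:ℂ) + (b:ℂ) * Complex.I) := by
    rw [hNe, hGprod]
    have : ((G:ℤ):ℂ) = ((G:ℝ):ℂ) := by push_cast; ring
    rw [this]
    field_simp
  have hGR : (0:ℝ) < (G:ℝ) := by exact_mod_cast hGpos
  have hre : (N / (M:ℂ)).re = (G:ℝ) * a := by
    rw [hNM]; simp
  have him : (N / (M:ℂ)).im = (G:ℝ) * b := by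
    rw [hNM]; simp
  have hQre : Q.re = ⌊(G:ℝ) * a⌋ := by rw [hQdef, hre]
  have hQim : Q.im = ⌊(G:ℝ) * b⌋ := by rw [hQdef, him]
  have hb1' : 0 ≤ Q.re := hQre ▸ Int.floor_nonneg.mpr (by positivity)
  have hb2' : Q.re < G := hQre ▸ Int.floor_lt.mpr (by nlinarith)
  have hb3' : 0 ≤ Q.im := hQim ▸ Int.floor_nonneg.mpr (by positivity)
  have hb4' : Q.im < G := hQim ▸ Int.floor_lt.mpr (by nlinarith)
  have hcmod : cmod (∑ i, γbar i * γ i * q i) (∏ i, Γ i) = (Q : ℂ) := by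
    rw [hsum, hGprod, hSc, cmod_add_mul hGc0, cmod_gauss_eq hGpos Q hb1' hb2' hb3' hb4']
  refine ⟨parta, partb, ?_⟩
  rw [hcmod, hrc']
  ring
end
end

section
/- Let M be a positive integer, r^c ∈ F_M a complex number, Δr₁, …, Δr_L complex numbers, and w₁, …, w_L positive reals with Σ_{i=1}^{L} w_i = 1. Set r̃_i^c := ⟨r^c + Δr_i⟩_M and Δr̄ := Σ_{i=1}^{L} w_i·Δr_i. Suppose |Re(Δr̄)| < M/2 and |Im(Δr̄)| < M/2, and that for every nonempty proper subset V of {1, …, L}, with V̄ its complement, Σ_{i∈V} w_i·Δr_i / (Σ_{j∈V} w_j) − Σ_{i∈V̄} w_i·Δr_i / (Σ_{j∈V̄} w_j) ∈ S_M. Then the point ⟨r^c + Δr̄⟩_M minimizes x ↦ Σ_{i=1}^{L} w_i·|d_M(r̃_i^c, x)|² over x ∈ F_M. -/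
open Complex MeasureTheory

noncomputable section

/-- Core 1-D lemma: optimality of the weighted-mean-based estimate on the circle. -/
lemma key_1d {L : ℕ} {M : ℝ} (hM : 0 < M) (w δ d : Fin L → ℝ)
    (hw : ∀ i, 0 < w i) (hsum : ∑ i, w i = 1)
    (δb : ℝ) (hδb : δb = ∑ i, w i * δ i)
    (hd₁ : ∀ i, -(M/2) ≤ d i) (hd₂ : ∀ i, d i < M/2)
    (hdev : ∀ i, |δ i - δb| < M/2)
    (hcong : ∀ i j, ∃ n : ℤ, (d i - (δ i - δb)) - (d j - (δ j - δb)) = n * M)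
    (hV : ∀ V : Finset (Fin L), V.Nonempty → V ≠ Finset.univ →
      (∑ i ∈ V, w i * δ i) / (∑ i ∈ V, w i) - (∑ i ∈ Vᶜ, w i * δ i) / (∑ i ∈ Vᶜ, w i) ≤ M/2) :
    ∑ i, w i * (δ i - δb)^2 ≤ ∑ i, w i * (d i)^2 := by
  rcases Nat.eq_zero_or_pos L with hL | hL
  · subst hL; simp
  have hne : (Finset.univ : Finset (Fin L)).Nonempty := ⟨⟨0, hL⟩, Finset.mem_univ _⟩
  set u : Fin L → ℝ := fun i => d i - (δ i - δb) with hu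
  obtain ⟨i0, -, hmax⟩ := Finset.exists_max_image Finset.univ u hne
  set a : ℝ := u i0 with ha
  have habs : ∀ i, |u i| < M := by
    intro i
    have h1 := hd₁ i; have h2 := hd₂ i; have h3 := abs_lt.1 (hdev i)
    have hui : u i = d i - (δ i - δb) := rfl
    rw [abs_lt, hui]; constructor
    · linarith
    · linarith
  have hcases : ∀ i, u i = a ∨ u i = a - M := by
    intro i
    obtain ⟨n, hn⟩ := hcong i i0
    have hui := habs i; have hua := habs i0
    have hle : u i ≤ a := hmax i (Finset.mem_univ i)
    have h1 : u i - a = n * M := hn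
    have hn0 : n = 0 ∨ n = -1 := by
      have hlt : (-2 : ℝ) * M < n * M := by rw [← h1]; cases abs_lt.1 hui; cases abs_lt.1 hua; linarith
      have hle' : n * M ≤ 0 := by rw [← h1]; linarith
      have h2' : (-2 : ℤ) < n := by
        by_contra hcon
        push_neg at hcon
        have : (n : ℝ) * M ≤ (-2 : ℝ) * M := by
          apply mul_le_mul_of_nonneg_right _ hM.le
          exact_mod_cast hcon
        linarith
      have h3' : n ≤ 0 := by
        by_contra hcon
        push_neg at hcon
        have : (0:ℝ) < n * M := by positivity
        linarith
      omega
    rcases hn0 with h | h <;> [left; right] <;> subst h <;> push_cast at h1 <;> linarith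
  classical
  set V : Finset (Fin L) := Finset.univ.filter (fun i => u i ≠ a) with hVdef
  have hVmem : ∀ i ∈ V, u i = a - M := by
    intro i hi
    rcases hcases i with h | h
    · exact absurd h (Finset.mem_filter.1 hi).2
    · exact h
  have hVcmem : ∀ i ∈ Vᶜ, u i = a := by
    intro i hi
    have : ¬ (u i ≠ a) := by
      intro h
      exact (Finset.mem_compl.1 hi) (Finset.mem_filter.2 ⟨Finset.mem_univ i, h⟩)
    tauto
  set W : ℝ := ∑ i ∈ V, w i with hW
  set S : ℝ := ∑ i ∈ V, w i * (δ i - δb) with hS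
  have hWc : ∑ i ∈ Vᶜ, w i = 1 - W := by
    have := Finset.sum_add_sum_compl V w
    rw [hsum] at this; linarith
  have htot : ∑ i, w i * (δ i - δb) = 0 := by
    have : ∑ i, w i * (δ i - δb) = (∑ i, w i * δ i) - δb * (∑ i, w i) := by
      rw [Finset.mul_sum, ← Finset.sum_sub_distrib]
      apply Finset.sum_congr rfl; intro i _; ring
    rw [this, hsum, ← hδb]; ring
  have hSc : ∑ i ∈ Vᶜ, w i * (δ i - δb) = -S := by
    have := Finset.sum_add_sum_compl V (fun i => w i * (δ i - δb))
    rw [htot] at this; simp only [← hS] at this; linarith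
  have hkey : S ≤ W * (1 - W) * M / 2 := by
    rcases Finset.eq_empty_or_nonempty V with hVe | hVne
    · simp [hS, hW, hVe]
    have hVp : V ≠ Finset.univ := by
      intro h
      have : i0 ∈ V := h ▸ Finset.mem_univ i0
      exact (Finset.mem_filter.1 this).2 rfl
    have hQ := hV V hVne hVp
    have hWpos : 0 < W := Finset.sum_pos (fun i _ => hw i) hVne
    have hWcpos : 0 < 1 - W := by
      rw [← hWc]
      apply Finset.sum_pos (fun i _ => hw i)
      rw [Finset.nonempty_iff_ne_empty]
      intro h
      exact hVp ((Finset.compl_eq_empty_iff V).1 h)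
    rw [hWc] at hQ
    have hSid : S = (1 - W) * (∑ i ∈ V, w i * δ i) - W * (∑ i ∈ Vᶜ, w i * δ i) := by
      have h1 : δb = (∑ i ∈ V, w i * δ i) + (∑ i ∈ Vᶜ, w i * δ i) := by
        rw [hδb, ← Finset.sum_add_sum_compl V (fun i => w i * δ i)]
      have h2 : S = (∑ i ∈ V, w i * δ i) - W * δb := by
        rw [hS, hW, Finset.sum_mul, ← Finset.sum_sub_distrib]
        apply Finset.sum_congr rfl; intro i _; ring
      rw [h2, h1]; ring
    have hmul := mul_le_mul_of_nonneg_left hQ (le_of_lt (mul_pos hWpos hWcpos))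
    have hfe : W * (1 - W) * ((∑ i ∈ V, w i * δ i) / W - (∑ i ∈ Vᶜ, w i * δ i) / (1 - W))
        = (1 - W) * (∑ i ∈ V, w i * δ i) - W * (∑ i ∈ Vᶜ, w i * δ i) := by
      field_simp
    rw [hfe] at hmul
    rw [hSid]
    nlinarith
  have hWnn : 0 ≤ W := Finset.sum_nonneg (fun i _ => (hw i).le)
  have hexp : ∑ i, w i * (d i)^2
      = (∑ i, w i * (u i)^2) + 2 * (∑ i, w i * (u i) * (δ i - δb)) + ∑ i, w i * (δ i - δb)^2 := by
    rw [Finset.mul_sum, ← Finset.sum_add_distrib, ← Finset.sum_add_distrib]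
    apply Finset.sum_congr rfl; intro i _
    have : d i = u i + (δ i - δb) := by simp [hu]
    rw [this]; ring
  have hu2 : ∑ i, w i * (u i)^2 = W * (a - M)^2 + (1 - W) * a^2 := by
    rw [← Finset.sum_add_sum_compl V (fun i => w i * (u i)^2)]
    have e1 : ∑ i ∈ V, w i * (u i)^2 = W * (a - M)^2 := by
      rw [hW, Finset.sum_mul]
      apply Finset.sum_congr rfl; intro i hi; rw [hVmem i hi]
    have e2 : ∑ i ∈ Vᶜ, w i * (u i)^2 = (1 - W) * a^2 := by
      rw [← hWc, Finset.sum_mul]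
      apply Finset.sum_congr rfl; intro i hi; rw [hVcmem i hi]
    rw [e1, e2]
  have hu1 : ∑ i, w i * (u i) * (δ i - δb) = -(M * S) := by
    rw [← Finset.sum_add_sum_compl V (fun i => w i * (u i) * (δ i - δb))]
    have e1 : ∑ i ∈ V, w i * (u i) * (δ i - δb) = (a - M) * S := by
      rw [hS, Finset.mul_sum]
      apply Finset.sum_congr rfl; intro i hi; rw [hVmem i hi]; ring
    have e2 : ∑ i ∈ Vᶜ, w i * (u i) * (δ i - δb) = a * (∑ i ∈ Vᶜ, w i * (δ i - δb)) := by
      rw [Finset.mul_sum]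
      apply Finset.sum_congr rfl; intro i hi; rw [hVcmem i hi]; ring
    rw [e1, e2, hSc]; ring
  rw [hexp, hu2, hu1]
  nlinarith [sq_nonneg (a - W * M), mul_le_mul_of_nonneg_left hkey (by linarith : (0:ℝ) ≤ 2 * M)]

lemma cmod_re' (z : ℂ) (r : ℝ) : (cmod z ((r:ℝ):ℂ)).re = z.re - r * ⌊z.re / r⌋ := by
  simp [cmod, cfloor, Complex.div_ofReal_re, Complex.div_ofReal_im]

lemma cmod_im' (z : ℂ) (r : ℝ) : (cmod z ((r:ℝ):ℂ)).im = z.im - r * ⌊z.im / r⌋ := by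
  simp [cmod, cfloor, Complex.div_ofReal_re, Complex.div_ofReal_im]

lemma cdist_re' (r : ℝ) (x y : ℂ) :
    (cdist ((r:ℝ):ℂ) x y).re = (x.re - y.re) - round ((x.re - y.re)/r) * r := by
  simp [cdist, cround, Complex.div_ofReal_re, Complex.div_ofReal_im]

lemma cdist_im' (r : ℝ) (x y : ℂ) :
    (cdist ((r:ℝ):ℂ) x y).im = (x.im - y.im) - round ((x.im - y.im)/r) * r := by
  simp [cdist, cround, Complex.div_ofReal_re, Complex.div_ofReal_im]

lemma round_sub_bounds (M : ℝ) (hM : 0 < M) (t : ℝ) :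
    -(M/2) ≤ t - round (t/M) * M ∧ t - round (t/M) * M < M/2 := by
  have h1 : (⌊t/M + 1/2⌋ : ℝ) ≤ t/M + 1/2 := Int.floor_le _
  have h2 : t/M + 1/2 < ⌊t/M + 1/2⌋ + 1 := Int.lt_floor_add_one _
  rw [round_eq]
  have ht : t = (t/M) * M := by field_simp
  constructor <;> nlinarith [h1, h2]

lemma round_zero_of_small {t : ℝ} (h : |t| < 1/2) : round t = 0 := by
  rw [round_eq_zero_iff]
  have := abs_lt.1 h
  constructor
  · linarith [this.1]
  · linarith [this.2]

lemma round_shift (M : ℝ) (hM : 0 < M) (t : ℝ) (ht : |t| < M/2) (k : ℤ) :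
    (t + k * M) - round ((t + k * M)/M) * M = t := by
  have h1 : (t + k * M)/M = t/M + k := by field_simp
  have h2 : round (t/M) = 0 := by
    apply round_zero_of_small
    rw [abs_div, abs_of_pos hM, div_lt_iff₀ hM]
    calc |t| < M/2 := ht
    _ = 1/2 * M := by ring
  rw [h1, round_add_intCast, h2]
  push_cast
  ring

lemma sm_bounds {MR : ℝ} (hMR : 0 < MR) {z : ℂ} (hz : z ∈ SM ((MR:ℝ):ℂ)) :
    (-(MR/2) ≤ z.re ∧ z.re < MR/2) ∧ (-(MR/2) ≤ z.im ∧ z.im < MR/2) := by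
  obtain ⟨c, d, h1, h2, h3, h4, h5⟩ := hz
  have hre : z.re = MR * c := by
    rw [h5]; simp [Complex.mul_re, Complex.add_re, Complex.add_im, Complex.mul_im]
  have him : z.im = MR * d := by
    rw [h5]; simp [Complex.mul_re, Complex.add_re, Complex.add_im, Complex.mul_im]
  rw [hre, him]
  refine ⟨⟨?_, ?_⟩, ?_, ?_⟩ <;> nlinarith


/-- Sufficient condition for `⟨r^c + Δr̄⟩_M` to be the optimal estimate of the
common remainder. -/
theorem stmt15 (L : ℕ) (M : ℤ) (hM : 0 < M)
    (rc : ℂ) (hrc : rc ∈ FM (M : ℂ))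
    (Δr : Fin L → ℂ)
    (w : Fin L → ℝ) (hw : ∀ i, 0 < w i) (hsum : ∑ i, w i = 1)
    (rt : Fin L → ℂ) (hrt : ∀ i, rt i = cmod (rc + Δr i) (M : ℂ))
    (Δrbar : ℂ) (hΔrbar : Δrbar = ∑ i, (w i : ℂ) * Δr i)
    (hRe : |Δrbar.re| < (M : ℝ) / 2) (hIm : |Δrbar.im| < (M : ℝ) / 2)
    (hV : ∀ V : Finset (Fin L), V.Nonempty → V ≠ Finset.univ →
      (∑ i ∈ V, (w i : ℂ) * Δr i) / (∑ j ∈ V, (w j : ℂ)) -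
        (∑ i ∈ Vᶜ, (w i : ℂ) * Δr i) / (∑ j ∈ Vᶜ, (w j : ℂ)) ∈ SM (M : ℂ)) :
    ∀ x ∈ FM (M : ℂ),
      (∑ i, w i * ‖cdist (M : ℂ) (rt i) (cmod (rc + Δrbar) (M : ℂ))‖ ^ 2) ≤
      (∑ i, w i * ‖cdist (M : ℂ) (rt i) x‖ ^ 2) := by
  intro x hx
  classical
  set MR : ℝ := (M : ℝ) with hMRdef
  have hMR : 0 < MR := by rw [hMRdef]; exact_mod_cast hM
  have hMC : ((M:ℤ):ℂ) = ((MR:ℝ):ℂ) := by rw [hMRdef]; push_cast; ring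
  simp only [hMC]
  have hrt' : ∀ i, rt i = cmod (rc + Δr i) ((MR:ℝ):ℂ) := by
    intro i; rw [hrt i, hMC]
  -- real/imag parts of the remainders
  have hrtre : ∀ i, (rt i).re = rc.re + (Δr i).re - MR * ⌊(rc.re + (Δr i).re)/MR⌋ := by
    intro i; rw [hrt' i, cmod_re']; simp [Complex.add_re]
  have hrtim : ∀ i, (rt i).im = rc.im + (Δr i).im - MR * ⌊(rc.im + (Δr i).im)/MR⌋ := by
    intro i; rw [hrt' i, cmod_im']; simp [Complex.add_im]
  -- real/imag parts of the mean
  have hδbR : Δrbar.re = ∑ i, w i * (Δr i).re := by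
    rw [hΔrbar, Complex.re_sum]
    apply Finset.sum_congr rfl; intro i _; exact Complex.re_ofReal_mul _ _
  have hδbI : Δrbar.im = ∑ i, w i * (Δr i).im := by
    rw [hΔrbar, Complex.im_sum]
    apply Finset.sum_congr rfl; intro i _; exact Complex.im_ofReal_mul _ _
  -- deviations are small
  have hdev : ∀ i, |(Δr i).re - Δrbar.re| < MR/2 ∧ |(Δr i).im - Δrbar.im| < MR/2 := by
    intro i
    by_cases hiu : ({i} : Finset (Fin L)) = Finset.univ
    · have hw1 : w i = 1 := by rw [← hsum, ← hiu, Finset.sum_singleton]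
      have hbar : Δrbar = Δr i := by
        rw [hΔrbar, ← hiu, Finset.sum_singleton, hw1]; simp
      rw [hbar]
      simp only [sub_self, abs_zero]
      constructor <;> positivity
    · have hz := hV {i} (Finset.singleton_nonempty i) hiu
      rw [hMC] at hz
      have hb := sm_bounds hMR hz
      have hcs : ∑ j ∈ ({i} : Finset (Fin L))ᶜ, w j = 1 - w i := by
        have := Finset.sum_add_sum_compl ({i} : Finset (Fin L)) w
        rw [hsum, Finset.sum_singleton] at this; linarith
      have hwc : 0 < 1 - w i := by
        rw [← hcs]
        apply Finset.sum_pos (fun j _ => hw j)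
        rw [Finset.nonempty_iff_ne_empty]
        intro h
        exact hiu ((Finset.compl_eq_empty_iff _).1 h)
      have hcsC : ∑ j ∈ ({i} : Finset (Fin L))ᶜ, ((w j:ℝ):ℂ) = ((1 - w i : ℝ):ℂ) := by
        rw [← hcs]; push_cast; rfl
      have hcΔ : ∑ j ∈ ({i} : Finset (Fin L))ᶜ, ((w j:ℝ):ℂ) * Δr j
          = Δrbar - ((w i:ℝ):ℂ) * Δr i := by
        have h := Finset.sum_add_sum_compl ({i} : Finset (Fin L)) (fun j => ((w j:ℝ):ℂ) * Δr j)
        rw [Finset.sum_singleton] at h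
        rw [← hΔrbar] at h
        linear_combination h
      have hwine : ((w i:ℝ):ℂ) ≠ 0 := by
        exact_mod_cast (hw i).ne'
      have hwcne : ((1 - w i : ℝ):ℂ) ≠ 0 := by
        exact_mod_cast hwc.ne'
      have hzeq : (∑ j ∈ ({i} : Finset (Fin L)), ((w j:ℝ):ℂ) * Δr j) /
            (∑ j ∈ ({i} : Finset (Fin L)), ((w j:ℝ):ℂ)) -
          (∑ j ∈ ({i} : Finset (Fin L))ᶜ, ((w j:ℝ):ℂ) * Δr j) /
            (∑ j ∈ ({i} : Finset (Fin L))ᶜ, ((w j:ℝ):ℂ))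
          = (Δr i - Δrbar) / ((1 - w i : ℝ):ℂ) := by
        rw [Finset.sum_singleton, Finset.sum_singleton, hcΔ, hcsC]
        have hwcne' : (1:ℂ) - ((w i:ℝ):ℂ) ≠ 0 := by push_cast at hwcne; exact hwcne
        push_cast
        field_simp
        ring
      rw [hzeq] at hz hb
      have hre2 : (Δr i).re - Δrbar.re = ((Δr i - Δrbar) / ((1 - w i : ℝ):ℂ)).re * (1 - w i) := by
        rw [Complex.div_ofReal_re]
        field_simp
        rw [Complex.sub_re]
      have him2 : (Δr i).im - Δrbar.im = ((Δr i - Δrbar) / ((1 - w i : ℝ):ℂ)).im * (1 - w i) := by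
        rw [Complex.div_ofReal_im]
        field_simp
        rw [Complex.sub_im]
      constructor
      · rw [hre2, abs_mul, abs_of_pos hwc]
        have h1 : |((Δr i - Δrbar) / ((1 - w i : ℝ):ℂ)).re| ≤ MR/2 :=
          abs_le.2 ⟨hb.1.1, hb.1.2.le⟩
        nlinarith [abs_nonneg ((Δr i - Δrbar) / ((1 - w i : ℝ):ℂ)).re, hw i]
      · rw [him2, abs_mul, abs_of_pos hwc]
        have h1 : |((Δr i - Δrbar) / ((1 - w i : ℝ):ℂ)).im| ≤ MR/2 :=
          abs_le.2 ⟨hb.2.1, hb.2.2.le⟩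
        nlinarith [abs_nonneg ((Δr i - Δrbar) / ((1 - w i : ℝ):ℂ)).im, hw i]
  -- real versions of the subset condition
  have hVreal : ∀ V : Finset (Fin L), V.Nonempty → V ≠ Finset.univ →
      ((∑ i ∈ V, w i * (Δr i).re)/(∑ i ∈ V, w i)
          - (∑ i ∈ Vᶜ, w i * (Δr i).re)/(∑ i ∈ Vᶜ, w i) ≤ MR/2)
      ∧ ((∑ i ∈ V, w i * (Δr i).im)/(∑ i ∈ V, w i)
          - (∑ i ∈ Vᶜ, w i * (Δr i).im)/(∑ i ∈ Vᶜ, w i) ≤ MR/2) := by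
    intro V hVne hVp
    have hz := hV V hVne hVp
    rw [hMC] at hz
    have hb := sm_bounds hMR hz
    have e1 : ∀ (s : Finset (Fin L)),
        ((∑ j ∈ s, ((w j:ℝ):ℂ) * Δr j) / (∑ j ∈ s, ((w j:ℝ):ℂ))).re
          = (∑ j ∈ s, w j * (Δr j).re) / (∑ j ∈ s, w j) := by
      intro s
      have h2 : (∑ j ∈ s, ((w j:ℝ):ℂ)) = ((∑ j ∈ s, w j : ℝ):ℂ) := by push_cast; rfl
      rw [h2, Complex.div_ofReal_re, Complex.re_sum]
      congr 1
      apply Finset.sum_congr rfl; intro j _; exact Complex.re_ofReal_mul _ _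
    have e2 : ∀ (s : Finset (Fin L)),
        ((∑ j ∈ s, ((w j:ℝ):ℂ) * Δr j) / (∑ j ∈ s, ((w j:ℝ):ℂ))).im
          = (∑ j ∈ s, w j * (Δr j).im) / (∑ j ∈ s, w j) := by
      intro s
      have h2 : (∑ j ∈ s, ((w j:ℝ):ℂ)) = ((∑ j ∈ s, w j : ℝ):ℂ) := by push_cast; rfl
      rw [h2, Complex.div_ofReal_im, Complex.im_sum]
      congr 1
      apply Finset.sum_congr rfl; intro j _; exact Complex.im_ofReal_mul _ _
    constructor
    · have := hb.1.2.le
      rw [Complex.sub_re, e1 V, e1 Vᶜ] at this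
      exact this
    · have := hb.2.2.le
      rw [Complex.sub_im, e2 V, e2 Vᶜ] at this
      exact this
  -- identities for cdist at the candidate point
  have habs2 : ∀ z : ℂ, ‖z‖ ^ 2 = z.re^2 + z.im^2 := by
    intro z; rw [Complex.sq_norm, Complex.normSq_apply]; ring
  have hxsre : (cmod (rc + Δrbar) ((MR:ℝ):ℂ)).re
      = rc.re + Δrbar.re - MR * ⌊(rc.re + Δrbar.re)/MR⌋ := by
    rw [cmod_re']; simp [Complex.add_re]
  have hxsim : (cmod (rc + Δrbar) ((MR:ℝ):ℂ)).im
      = rc.im + Δrbar.im - MR * ⌊(rc.im + Δrbar.im)/MR⌋ := by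
    rw [cmod_im']; simp [Complex.add_im]
  have hstar_re : ∀ i, (cdist ((MR:ℝ):ℂ) (rt i) (cmod (rc + Δrbar) ((MR:ℝ):ℂ))).re
      = (Δr i).re - Δrbar.re := by
    intro i
    rw [cdist_re']
    have harg : (rt i).re - (cmod (rc + Δrbar) ((MR:ℝ):ℂ)).re
        = ((Δr i).re - Δrbar.re)
          + ((⌊(rc.re + Δrbar.re)/MR⌋ - ⌊(rc.re + (Δr i).re)/MR⌋ : ℤ)) * MR := by
      rw [hrtre i, hxsre]; push_cast; ring
    rw [harg]
    exact round_shift MR hMR _ (hdev i).1 _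
  have hstar_im : ∀ i, (cdist ((MR:ℝ):ℂ) (rt i) (cmod (rc + Δrbar) ((MR:ℝ):ℂ))).im
      = (Δr i).im - Δrbar.im := by
    intro i
    rw [cdist_im']
    have harg : (rt i).im - (cmod (rc + Δrbar) ((MR:ℝ):ℂ)).im
        = ((Δr i).im - Δrbar.im)
          + ((⌊(rc.im + Δrbar.im)/MR⌋ - ⌊(rc.im + (Δr i).im)/MR⌋ : ℤ)) * MR := by
      rw [hrtim i, hxsim]; push_cast; ring
    rw [harg]
    exact round_shift MR hMR _ (hdev i).2 _
  -- congruence data for the general point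
  have hui_re : ∀ i, (cdist ((MR:ℝ):ℂ) (rt i) x).re - ((Δr i).re - Δrbar.re)
      = (rc.re + Δrbar.re - x.re)
        - MR * (⌊(rc.re + (Δr i).re)/MR⌋ + round (((rt i).re - x.re)/MR)) := by
    intro i
    rw [cdist_re', hrtre i]
    push_cast
    ring
  have hui_im : ∀ i, (cdist ((MR:ℝ):ℂ) (rt i) x).im - ((Δr i).im - Δrbar.im)
      = (rc.im + Δrbar.im - x.im)
        - MR * (⌊(rc.im + (Δr i).im)/MR⌋ + round (((rt i).im - x.im)/MR)) := by
    intro i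
    rw [cdist_im', hrtim i]
    push_cast
    ring
  -- apply the 1-D lemma twice
  have hkre := key_1d hMR w (fun i => (Δr i).re) (fun i => (cdist ((MR:ℝ):ℂ) (rt i) x).re)
    hw hsum Δrbar.re hδbR
    (fun i => by rw [cdist_re']; exact (round_sub_bounds MR hMR _).1)
    (fun i => by rw [cdist_re']; exact (round_sub_bounds MR hMR _).2)
    (fun i => (hdev i).1)
    (fun i j => by
      refine ⟨(⌊(rc.re + (Δr j).re)/MR⌋ + round (((rt j).re - x.re)/MR))
        - (⌊(rc.re + (Δr i).re)/MR⌋ + round (((rt i).re - x.re)/MR)), ?_⟩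
      push_cast
      linear_combination (hui_re i) - (hui_re j))
    (fun V a b => (hVreal V a b).1)
  have hkim := key_1d hMR w (fun i => (Δr i).im) (fun i => (cdist ((MR:ℝ):ℂ) (rt i) x).im)
    hw hsum Δrbar.im hδbI
    (fun i => by rw [cdist_im']; exact (round_sub_bounds MR hMR _).1)
    (fun i => by rw [cdist_im']; exact (round_sub_bounds MR hMR _).2)
    (fun i => (hdev i).2)
    (fun i j => by
      refine ⟨(⌊(rc.im + (Δr j).im)/MR⌋ + round (((rt j).im - x.im)/MR))
        - (⌊(rc.im + (Δr i).im)/MR⌋ + round (((rt i).im - x.im)/MR)), ?_⟩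
      push_cast
      linear_combination (hui_im i) - (hui_im j))
    (fun V a b => (hVreal V a b).2)
  calc ∑ i, w i * ‖cdist ((MR:ℝ):ℂ) (rt i) (cmod (rc + Δrbar) ((MR:ℝ):ℂ))‖ ^ 2
      = ∑ i, (w i * ((Δr i).re - Δrbar.re)^2 + w i * ((Δr i).im - Δrbar.im)^2) := by
        apply Finset.sum_congr rfl; intro i _
        rw [habs2, hstar_re i, hstar_im i]; ring
    _ = (∑ i, w i * ((Δr i).re - Δrbar.re)^2) + ∑ i, w i * ((Δr i).im - Δrbar.im)^2 :=
        Finset.sum_add_distrib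
    _ ≤ (∑ i, w i * ((cdist ((MR:ℝ):ℂ) (rt i) x).re)^2)
        + ∑ i, w i * ((cdist ((MR:ℝ):ℂ) (rt i) x).im)^2 := add_le_add hkre hkim
    _ = ∑ i, w i * ‖cdist ((MR:ℝ):ℂ) (rt i) x‖ ^ 2 := by
        rw [← Finset.sum_add_distrib]
        apply Finset.sum_congr rfl; intro i _
        rw [habs2]; ring
end
end
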